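/- Let φ, ψ: Mₙ(ℂ) → Mₙ(ℂ) be q-positive maps and for ε ∈ (0,1) set φ_ε = εI + (1−ε)φ and ψ_ε = εI + (1−ε)ψ. Then φ ≥_q ψ if and only if φ_ε ≥_q ψ_ε for all ε ∈ (0,1). -/

import Mathlib

open scoped ComplexOrder BigOperators
open Matrix

abbrev MatC (n : ℕ) := Matrix (Fin n) (Fin n) ℂ

/-- Complete positivity of a linear map on `Mₙ(ℂ)`:
for all finite families `Aᵢ`, `fᵢ`, `∑ ⟨fᵢ, φ(Aᵢ* Aⱼ) fⱼ⟩ ≥ 0`. -/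
def IsCP {n : ℕ} (φ : Module.End ℂ (MatC n)) : Prop :=
  ∀ (m : ℕ) (A : Fin m → MatC n) (f : Fin m → (Fin n → ℂ)),
    0 ≤ ∑ i, ∑ j, star (f i) ⬝ᵥ ((φ ((A i)ᴴ * A j)) *ᵥ f j)

/-- `φ` has no negative (real) eigenvalues. -/
def NoNegEig {n : ℕ} (φ : Module.End ℂ (MatC n)) : Prop :=
  ∀ r : ℝ, r < 0 → ¬ Module.End.HasEigenvalue φ (r : ℂ)

/-- `φ^(t) = φ ∘ (I + t φ)⁻¹`. -/
noncomputable def qRes {n : ℕ} (φ : Module.End ℂ (MatC n)) (t : ℝ) :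
    Module.End ℂ (MatC n) :=
  φ * Ring.inverse (1 + (t : ℂ) • φ)

/-- `φ` is q-positive. -/
def IsQPos {n : ℕ} (φ : Module.End ℂ (MatC n)) : Prop :=
  NoNegEig φ ∧ ∀ t : ℝ, 0 ≤ t → IsCP (qRes φ t)

/-- `φ ≥_q ψ` : `φ(I+tφ)⁻¹ − ψ(I+tψ)⁻¹` is completely positive for all `t ≥ 0`. -/
def qLE {n : ℕ} (ψ φ : Module.End ℂ (MatC n)) : Prop :=
  ∀ t : ℝ, 0 ≤ t → IsCP (qRes φ t - qRes ψ t)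

/-- `φ` is q-pure: its q-subordinates are exactly `{0} ∪ {φ^(s) : s ≥ 0}`. -/
def IsQPure {n : ℕ} (φ : Module.End ℂ (MatC n)) : Prop :=
  IsQPos φ ∧ ∀ ψ : Module.End ℂ (MatC n),
    (IsQPos ψ ∧ qLE ψ φ) ↔ (ψ = 0 ∨ ∃ s : ℝ, 0 ≤ s ∧ ψ = qRes φ s)

/-- `φ_ε = ε I + (1−ε) φ`. -/
noncomputable def epsMap {n : ℕ} (φ : Module.End ℂ (MatC n)) (ε : ℝ) :
    Module.End ℂ (MatC n) :=
  (ε : ℂ) • 1 + ((1 - ε : ℝ) : ℂ) • φ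

/-! With `s = t(1-ε)/(1+tε)`, the resolvent identity
`φ_ε(I + tφ_ε)⁻¹ = ε/(1+tε) • I + (1-ε)/(1+tε)² • φ(I + sφ)⁻¹`
makes `φ_ε^(t) - ψ_ε^(t)` a positive multiple of `φ^(s) - ψ^(s)`. Every `s ≥ 0` arises this way
(`ε = 1/(2(1+s))`, `t = 2s`), so both orders are equivalent. -/

theorem NoNegEig.isUnit_one_add_smul {n : ℕ} {φ : Module.End ℂ (MatC n)} (hφ : NoNegEig φ)
    {t : ℝ} (ht : 0 ≤ t) : IsUnit (1 + (t : ℂ) • φ) := by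
  rcases ht.eq_or_lt with rfl | ht
  · simp
  have hσ : ((-t⁻¹ : ℝ) : ℂ) ∉ spectrum ℂ φ := by
    rw [← Module.End.hasEigenvalue_iff_mem_spectrum]
    exact hφ _ (by simpa using ht)
  have htC : (t : ℂ) ≠ 0 := by exact_mod_cast ht.ne'
  have h : 1 + (t : ℂ) • φ =
      (Units.mk0 _ (neg_ne_zero.2 htC)) • (algebraMap ℂ _ ((-t⁻¹ : ℝ) : ℂ) - φ) := by
    rw [Units.smul_mk0, Algebra.algebraMap_eq_smul_one, smul_sub, smul_smul]
    push_cast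
    field_simp
    module
  rw [h]
  exact (spectrum.notMem_iff.1 hσ).smul _

theorem mul_ringInverse_one_add_smul_convex {𝕜 E : Type*} [Field 𝕜] [Ring E] [Algebra 𝕜 E]
    (a : E) {ε t : 𝕜} (hc : 1 + t * ε ≠ 0)
    (hu : IsUnit (1 + (t * (1 - ε) / (1 + t * ε)) • a)) :
    (ε • 1 + (1 - ε) • a) * Ring.inverse (1 + t • (ε • 1 + (1 - ε) • a)) =
      (ε / (1 + t * ε)) • 1 +
        ((1 - ε) / (1 + t * ε) ^ 2) • (a * Ring.inverse (1 + (t * (1 - ε) / (1 + t * ε)) • a)) := by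
  set s := t * (1 - ε) / (1 + t * ε)
  have hfactor : 1 + t • (ε • 1 + (1 - ε) • a) = (Units.mk0 _ hc) • (1 + s • a) := by
    rw [Units.smul_mk0]
    unfold s
    match_scalars <;> field_simp
  rw [hfactor, eq_comm, Ring.eq_mul_inverse_iff_mul_eq _ _ _ (hu.smul _), Units.smul_mk0,
    mul_smul_comm, add_mul, smul_mul_assoc, smul_mul_assoc, one_mul, mul_assoc a,
    Ring.inverse_mul_cancel _ hu, mul_one]
  unfold s
  match_scalars
  · field_simp
  · field_simp
    ring

theorem qRes_epsMap {n : ℕ} (φ : Module.End ℂ (MatC n)) {ε t : ℝ} (hc : 1 + t * ε ≠ 0)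
    (hu : IsUnit (1 + ((t * (1 - ε) / (1 + t * ε) : ℝ) : ℂ) • φ)) :
    qRes (epsMap φ ε) t = ((ε / (1 + t * ε) : ℝ) : ℂ) • 1 +
      (((1 - ε) / (1 + t * ε) ^ 2 : ℝ) : ℂ) • qRes φ (t * (1 - ε) / (1 + t * ε)) := by
  rw [qRes, qRes, epsMap]
  push_cast at hu ⊢
  exact mul_ringInverse_one_add_smul_convex φ (by exact_mod_cast hc) hu

theorem qRes_epsMap_sub {n : ℕ} {φ ψ : Module.End ℂ (MatC n)} (hφ : NoNegEig φ)
    (hψ : NoNegEig ψ) {ε t : ℝ} (hε0 : 0 ≤ ε) (hε1 : ε ≤ 1) (ht : 0 ≤ t) :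
    qRes (epsMap φ ε) t - qRes (epsMap ψ ε) t =
      (((1 - ε) / (1 + t * ε) ^ 2 : ℝ) : ℂ) •
        (qRes φ (t * (1 - ε) / (1 + t * ε)) - qRes ψ (t * (1 - ε) / (1 + t * ε))) := by
  have hc : 0 < 1 + t * ε := by positivity
  have hs : 0 ≤ t * (1 - ε) / (1 + t * ε) := by
    have := sub_nonneg.2 hε1
    positivity
  rw [qRes_epsMap φ hc.ne' (hφ.isUnit_one_add_smul hs),
    qRes_epsMap ψ hc.ne' (hψ.isUnit_one_add_smul hs), add_sub_add_left_eq_sub, smul_sub]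

theorem IsCP.smul {n : ℕ} {X : Module.End ℂ (MatC n)} (hX : IsCP X) {c : ℝ} (hc : 0 ≤ c) :
    IsCP ((c : ℂ) • X) := by
  intro m A f
  simp only [LinearMap.smul_apply, smul_mulVec, dotProduct_smul, smul_eq_mul, ← Finset.mul_sum]
  exact mul_nonneg (by exact_mod_cast hc) (hX m A f)

theorem isCP_smul_iff {n : ℕ} {X : Module.End ℂ (MatC n)} {c : ℝ} (hc : 0 < c) :
    IsCP ((c : ℂ) • X) ↔ IsCP X := by
  refine ⟨fun h => ?_, fun h => h.smul hc.le⟩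
  simpa [smul_smul, hc.ne'] using h.smul (inv_nonneg.2 hc.le)

theorem qLE.epsMap {n : ℕ} {φ ψ : Module.End ℂ (MatC n)} (h : qLE ψ φ) (hφ : NoNegEig φ)
    (hψ : NoNegEig ψ) {ε : ℝ} (hε0 : 0 ≤ ε) (hε1 : ε ≤ 1) :
    qLE (epsMap ψ ε) (epsMap φ ε) := by
  intro t ht
  rw [qRes_epsMap_sub hφ hψ hε0 hε1 ht]
  have := sub_nonneg.2 hε1
  exact (h _ (by positivity)).smul (by positivity)

theorem qLE_of_forall_epsMap {n : ℕ} {φ ψ : Module.End ℂ (MatC n)} (hφ : NoNegEig φ)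
    (hψ : NoNegEig ψ) (h : ∀ ε : ℝ, 0 < ε → ε < 1 → qLE (epsMap ψ ε) (epsMap φ ε)) :
    qLE ψ φ := by
  intro s hs
  set ε : ℝ := 1 / (2 * (1 + s))
  have hε0 : 0 < ε := by positivity
  have hε1 : ε < 1 := by
    rw [div_lt_one (by positivity)]
    linarith
  have hreparam : 2 * s * (1 - ε) / (1 + 2 * s * ε) = s := by
    simp only [ε]
    field_simp
    ring
  have hdiff := h ε hε0 hε1 (2 * s) (by positivity)
  rw [qRes_epsMap_sub hφ hψ hε0.le hε1.le (by positivity), hreparam,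
    isCP_smul_iff (by have := sub_pos.2 hε1; positivity)] at hdiff
  exact hdiff

/-- For q-positive `φ, ψ`: `φ ≥_q ψ` iff `φ_ε ≥_q ψ_ε` for all `ε ∈ (0,1)`. -/
theorem stmt14 {n : ℕ} (φ ψ : Module.End ℂ (MatC n))
    (hφ : IsQPos φ) (hψ : IsQPos ψ) :
    qLE ψ φ ↔ ∀ ε : ℝ, 0 < ε → ε < 1 → qLE (epsMap ψ ε) (epsMap φ ε) :=
  ⟨fun h _ hε0 hε1 => h.epsMap hφ.1 hψ.1 hε0.le hε1.le, qLE_of_forall_epsMap hφ.1 hψ.1⟩
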